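/- Let g ≥ 2 and let F be a free group of rank 2g (the fundamental group of the compact genus-g surface with one boundary component). Let Γ be a normal subgroup of infinite index in F such that the quotient F/Γ is solvable and not cyclic. The conjugation action of F on Γ induces an action of F on the abelianization H_1(Γ; ℤ). Then for every nonzero v ∈ H_1(Γ; ℤ), the subgroup of H_1(Γ; ℤ) generated by the F-orbit of v is infinitely generated. -/

import Mathlib

section ConjAb

/-- The homomorphism `Aut(H) → Aut(H^{ab})` induced on abelianizations. -/
def mulAutToAbAut (H : Type) [Group H] : MulAut H →* MulAut (Abelianization H) where
  toFun e := e.abelianizationCongr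
  map_one' := by
    ext x
    induction x using QuotientGroup.induction_on with
    | H z => rfl
  map_mul' e₁ e₂ := by
    ext x
    induction x using QuotientGroup.induction_on with
    | H z => rfl

variable {G : Type} [Group G]

/-- The conjugation action of `G` on the abelianization of a normal subgroup `N`. -/
def conjAbAction (N : Subgroup G) [N.Normal] : G →* MulAut (Abelianization ↥N) :=
  (mulAutToAbAut ↥N).comp MulAut.conjNormal

/-- `H₁(N; ℤ)`: the abelianization of `N`, written additively (a `ℤ`-module). -/
abbrev H1ab (N : Subgroup G) : Type := Additive (Abelianization ↥N)

/-- The conjugation action of `x : G` on `H₁(N; ℤ)`. -/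
def conjAbSmul (N : Subgroup G) [N.Normal] (x : G) (v : H1ab N) : H1ab N :=
  Additive.ofMul (conjAbAction N x (Additive.toMul v))

end ConjAb

/-!
The Fox derivatives `∂u/∂xᵢ ∈ ℤ[Q]`, `Q = F/Γ`, define the Magnus embedding of `H₁(Γ; ℤ)` into
the free `ℤ[Q]`-module on the generators of `F`; it is injective because the Schreier generators
`s(q) xᵢ s(q xᵢ)⁻¹` of `Γ` give a left inverse, and it turns conjugation by `x` into
multiplication by the image of `x` in `Q`. A finitely generated subgroup of a free `ℤ[Q]`-module
involves only finitely many elements of `Q`, whereas the `Q`-translates of a nonzero element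
involve all of `Q`, which is infinite.
-/

open Finsupp

theorem AddSubgroup.FG.map {M N : Type*} [AddGroup M] [AddGroup N] {H : AddSubgroup M}
    (hH : H.FG) (f : M →+ N) : (H.map f).FG := by
  classical
  obtain ⟨S, rfl⟩ := hH
  exact ⟨S.image f, by rw [Finset.coe_image, AddMonoidHom.map_closure]⟩

theorem AddSubgroup.FG.exists_finite_support_subset {ι N : Type*} [AddCommGroup N]
    {H : AddSubgroup (ι →₀ N)} (hH : H.FG) :
    ∃ s : Set ι, s.Finite ∧ ∀ f ∈ H, ↑f.support ⊆ s := by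
  obtain ⟨S, rfl⟩ := hH
  refine ⟨⋃ f ∈ S, ↑f.support, S.finite_toSet.biUnion fun f _ => f.support.finite_toSet, ?_⟩
  have hle : AddSubgroup.closure (S : Set (ι →₀ N))
      ≤ (supported N ℤ (⋃ f ∈ S, ↑f.support)).toAddSubgroup := by
    rw [AddSubgroup.closure_le]
    intro f hf
    exact Set.subset_biUnion_of_mem (u := fun f : ι →₀ N => (f.support : Set ι)) hf
  exact fun f hf => hle hf

@[elab_as_elim]
theorem H1ab.induction_on {G : Type} [Group G] {N : Subgroup G} {p : H1ab N → Prop} (z : H1ab N)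
    (of : ∀ γ : N, p (.ofMul (.of γ))) : p z :=
  QuotientGroup.induction_on (C := fun x => p (.ofMul x)) z.toMul of

section FoxCocycle

variable {α Q M : Type*} [Group Q] [AddGroup M] (π : FreeGroup α →* Q)

-- `f q u` plays the role of `q • D u` for a crossed homomorphism `D` on the free group.
def IsFoxCocycle (f : Q → FreeGroup α → M) : Prop :=
  ∀ q u v, f q (u * v) = f q u + f (q * π u) v

variable {π}

theorem IsFoxCocycle.apply_one {f : Q → FreeGroup α → M} (hf : IsFoxCocycle π f) (q : Q) :
    f q 1 = 0 := by
  simpa using hf q 1 1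

theorem IsFoxCocycle.apply_of_inv {f : Q → FreeGroup α → M} (hf : IsFoxCocycle π f) (q : Q)
    (i : α) : f q (.of i)⁻¹ = -f (q * (π (.of i))⁻¹) (.of i) := by
  have h := hf (q * (π (.of i))⁻¹) (.of i) (.of i)⁻¹
  rw [mul_inv_cancel, hf.apply_one, inv_mul_cancel_right] at h
  exact (neg_eq_of_add_eq_zero_right h.symm).symm

theorem IsFoxCocycle.ext {f g : Q → FreeGroup α → M} (hf : IsFoxCocycle π f)
    (hg : IsFoxCocycle π g) (h : ∀ q i, f q (.of i) = g q (.of i)) : f = g := by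
  funext q u
  induction u using FreeGroup.induction_on generalizing q with
  | C1 => rw [hf.apply_one, hg.apply_one]
  | of i => exact h q i
  | inv_of i _ => rw [hf.apply_of_inv, hg.apply_of_inv, h]
  | mul u v hu hv => rw [hf, hg, hu, hv]

end FoxCocycle

section TranslationAction

-- `Q →₀ α →₀ ℤ` is the free `ℤ[Q]`-module on `α`, with `Q` translating the `Q`-coordinate.
attribute [local instance] Finsupp.comapSMul Finsupp.comapMulAction Finsupp.comapDistribMulAction

theorem Finsupp.not_fg_closure_range_smul {G ι N : Type*} [Group G] [MulAction G ι]
    [AddCommGroup N] {w : ι →₀ N} {p : ι} (hp : p ∈ w.support)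
    (horbit : (MulAction.orbit G p).Infinite) :
    ¬ (AddSubgroup.closure (Set.range fun g : G => g • w)).FG := by
  intro hFG
  obtain ⟨s, hs, hsupp⟩ := hFG.exists_finite_support_subset
  refine horbit (hs.subset ?_)
  rintro _ ⟨g, rfl⟩
  apply hsupp _ (AddSubgroup.subset_closure ⟨g, rfl⟩)
  simpa [mem_support_iff] using hp

section Fox

variable {α Q : Type*} [Group Q] (π : FreeGroup α →* Q)

noncomputable def magnusHom :
    FreeGroup α →* Multiplicative (Q →₀ α →₀ ℤ) ⋊[(MulAutMultiplicative _).symm.toMonoidHom.comp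
      (DistribMulAction.toAddAut Q (Q →₀ α →₀ ℤ))] Q :=
  FreeGroup.lift fun i => ⟨.ofAdd (single 1 (single i 1)), π (.of i)⟩

theorem magnusHom_right (u : FreeGroup α) : (magnusHom π u).right = π u := by
  suffices SemidirectProduct.rightHom.comp (magnusHom π) = π from DFunLike.congr_fun this u
  exact FreeGroup.ext_hom _ _ fun i => by
    simp only [magnusHom, MonoidHom.comp_apply, FreeGroup.lift_apply_of]
    rfl

noncomputable def foxCocycle (u : FreeGroup α) : Q →₀ α →₀ ℤ :=
  (magnusHom π u).left.toAdd

theorem foxCocycle_of (i : α) : foxCocycle π (.of i) = single 1 (single i 1) := by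
  simp only [foxCocycle, magnusHom, FreeGroup.lift_apply_of]
  rfl

theorem foxCocycle_one : foxCocycle π 1 = 0 := by
  rw [foxCocycle, map_one]
  rfl

theorem foxCocycle_mul (u v : FreeGroup α) :
    foxCocycle π (u * v) = foxCocycle π u + π u • foxCocycle π v := by
  simp only [foxCocycle, map_mul, SemidirectProduct.mul_left, magnusHom_right]
  rfl

theorem foxCocycle_conj (x : FreeGroup α) {γ : FreeGroup α} (hγ : π γ = 1) :
    foxCocycle π (x * γ * x⁻¹) = π x • foxCocycle π γ := by
  have h := foxCocycle_mul π x x⁻¹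
  rw [mul_inv_cancel, foxCocycle_one] at h
  rw [foxCocycle_mul, foxCocycle_mul, map_mul, hγ, mul_one, add_right_comm, ← h, zero_add]

theorem isFoxCocycle_map_smul_foxCocycle {M : Type*} [AddGroup M] (φ : (Q →₀ α →₀ ℤ) →+ M) :
    IsFoxCocycle π fun q u => φ (q • foxCocycle π u) := by
  intro q u v
  dsimp only
  rw [foxCocycle_mul, smul_add q (foxCocycle π u), smul_smul, map_add]

end Fox

section Magnus

variable {α : Type} (Γ : Subgroup (FreeGroup α)) [Γ.Normal]

noncomputable def schreierElement (q : FreeGroup α ⧸ Γ) (u : FreeGroup α) : Γ :=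
  ⟨q.out * u * (q * u).out⁻¹, by
    rw [← QuotientGroup.eq_one_iff]
    simp⟩

noncomputable def schreierClass (q : FreeGroup α ⧸ Γ) (u : FreeGroup α) : H1ab Γ :=
  .ofMul (.of (schreierElement Γ q u))

theorem isFoxCocycle_schreierClass : IsFoxCocycle (QuotientGroup.mk' Γ) (schreierClass Γ) := by
  intro q u v
  have : schreierElement Γ q (u * v) = schreierElement Γ q u * schreierElement Γ (q * u) v := by
    ext
    simp [schreierElement, mul_assoc]
  simp [schreierClass, this]

noncomputable def schreierRetraction : (FreeGroup α ⧸ Γ →₀ α →₀ ℤ) →+ H1ab Γ :=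
  liftAddHom fun q => liftAddHom fun i => zmultiplesHom _ (schreierClass Γ q (.of i))

theorem schreierRetraction_smul_foxCocycle (q : FreeGroup α ⧸ Γ) (u : FreeGroup α) :
    schreierRetraction Γ (q • foxCocycle (QuotientGroup.mk' Γ) u) = schreierClass Γ q u := by
  suffices (fun q u => schreierRetraction Γ (q • foxCocycle (QuotientGroup.mk' Γ) u))
      = schreierClass Γ from congrFun (congrFun this q) u
  refine (isFoxCocycle_map_smul_foxCocycle _ _).ext (isFoxCocycle_schreierClass Γ) fun q i => ?_
  rw [foxCocycle_of, comapSMul_single, smul_eq_mul, mul_one, schreierRetraction,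
    liftAddHom_apply_single, liftAddHom_apply_single, zmultiplesHom_apply, one_zsmul]

noncomputable def magnusEmbedding : H1ab Γ →+ (FreeGroup α ⧸ Γ →₀ α →₀ ℤ) :=
  MonoidHom.toAdditiveLeft <| Abelianization.lift
    { toFun := fun γ => .ofAdd (foxCocycle (QuotientGroup.mk' Γ) γ)
      map_one' := by simp [foxCocycle_one]
      map_mul' := fun γ δ => by
        simp [foxCocycle_mul, (QuotientGroup.eq_one_iff _).mpr γ.2] }

theorem magnusEmbedding_of (γ : Γ) :
    magnusEmbedding Γ (.ofMul (.of γ)) = foxCocycle (QuotientGroup.mk' Γ) γ :=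
  rfl

theorem schreierClass_one_of_mem (γ : Γ) : schreierClass Γ 1 γ = .ofMul (.of γ) := by
  have hs : (1 : FreeGroup α ⧸ Γ).out ∈ Γ := (QuotientGroup.eq_one_iff _).mp (by simp)
  have : schreierElement Γ 1 γ = ⟨_, hs⟩ * γ * ⟨_, hs⟩⁻¹ := by
    ext
    simp [schreierElement, (QuotientGroup.eq_one_iff _).mpr γ.2]
  rw [schreierClass, this]
  congr 1
  rw [map_mul, map_mul, map_inv, mul_right_comm, mul_inv_cancel, one_mul]

theorem schreierRetraction_magnusEmbedding (z : H1ab Γ) :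
    schreierRetraction Γ (magnusEmbedding Γ z) = z := by
  induction z using H1ab.induction_on with
  | of γ =>
    rw [magnusEmbedding_of, ← one_smul (FreeGroup α ⧸ Γ) (foxCocycle _ _),
      schreierRetraction_smul_foxCocycle, schreierClass_one_of_mem]

theorem magnusEmbedding_injective : Function.Injective (magnusEmbedding Γ) :=
  Function.LeftInverse.injective (schreierRetraction_magnusEmbedding Γ)

theorem magnusEmbedding_conjAbSmul (x : FreeGroup α) (z : H1ab Γ) :
    magnusEmbedding Γ (conjAbSmul Γ x z) = (x : FreeGroup α ⧸ Γ) • magnusEmbedding Γ z := by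
  induction z using H1ab.induction_on with
  | of γ =>
    have : conjAbSmul Γ x (.ofMul (.of γ)) = .ofMul (.of (MulAut.conjNormal x γ)) :=
      abelianizationCongr_of _ _
    rw [this, magnusEmbedding_of, magnusEmbedding_of, MulAut.conjNormal_apply,
      foxCocycle_conj _ _ ((QuotientGroup.eq_one_iff _).mpr γ.2)]
    rfl

theorem map_magnusEmbedding_closure_orbit (v : H1ab Γ) :
    (AddSubgroup.closure (Set.range fun x : FreeGroup α => conjAbSmul Γ x v)).map
      (magnusEmbedding Γ)
      = AddSubgroup.closure (Set.range fun q : FreeGroup α ⧸ Γ => q • magnusEmbedding Γ v) := by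
  rw [AddMonoidHom.map_closure, ← Set.range_comp]
  congr 1
  simp only [Function.comp_def, magnusEmbedding_conjAbSmul]
  exact QuotientGroup.mk_surjective.range_comp (fun q : FreeGroup α ⧸ Γ => q • magnusEmbedding Γ v)

theorem not_fg_closure_range_conjAbSmul (hindex : Γ.index = 0) {v : H1ab Γ} (hv : v ≠ 0) :
    ¬ (AddSubgroup.closure (Set.range fun x : FreeGroup α => conjAbSmul Γ x v)).FG := by
  have : Infinite (FreeGroup α ⧸ Γ) := Subgroup.index_eq_zero_iff_infinite.mp hindex
  obtain ⟨p, hp⟩ := support_nonempty_iff.mpr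
    ((map_ne_zero_iff _ (magnusEmbedding_injective Γ)).mpr hv)
  have horbit : (MulAction.orbit (FreeGroup α ⧸ Γ) p).Infinite := by
    rw [MulAction.orbit_eq_univ]
    exact Set.infinite_univ
  intro hFG
  refine Finsupp.not_fg_closure_range_smul hp horbit ?_
  rw [← map_magnusEmbedding_closure_orbit]
  exact hFG.map _

end Magnus

end TranslationAction

theorem orbit_span_infinitelyGenerated_freeGroup_general (g : ℕ)
    (Γ : Subgroup (FreeGroup (Fin (2 * g)))) [Γ.Normal] (hindex : Γ.index = 0)
    (v : H1ab Γ) (hv : v ≠ 0) :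
    ¬ (AddSubgroup.closure
        (Set.range fun x : FreeGroup (Fin (2 * g)) => conjAbSmul Γ x v)).FG :=
  not_fg_closure_range_conjAbSmul Γ hindex hv

/-- Let `g ≥ 2` and let `F` be the free group of rank `2g` (the fundamental
group of the compact genus-`g` surface with one boundary component).  Let `Γ` be a normal
subgroup of infinite index in `F` such that `F/Γ` is solvable and not cyclic.  Then for every
nonzero `v ∈ H₁(Γ; ℤ)`, the subgroup of `H₁(Γ; ℤ)` generated by the `F`-orbit of `v`
(under the conjugation action) is infinitely generated. -/
theorem orbit_span_infinitelyGenerated_freeGroup (g : ℕ) (hg : 2 ≤ g)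
    (Γ : Subgroup (FreeGroup (Fin (2 * g)))) [Γ.Normal] (hindex : Γ.index = 0)
    (hsolv : IsSolvable (FreeGroup (Fin (2 * g)) ⧸ Γ))
    (hcyc : ¬ IsCyclic (FreeGroup (Fin (2 * g)) ⧸ Γ))
    (v : H1ab Γ) (hv : v ≠ 0) :
    ¬ (AddSubgroup.closure
        (Set.range fun x : FreeGroup (Fin (2 * g)) => conjAbSmul Γ x v)).FG :=
  orbit_span_infinitelyGenerated_freeGroup_general g Γ hindex v hv
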